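/- arXiv:1210.1944 — 2 statements merged into one kernel-verified Lean document; each statement's English description precedes it below -/
import Mathlib

section
/- Let H be a Hilbert space and let (f_m)_{m ∈ ℤ} be a family of elements of H that is quasi-orthogonal with gap ℓ, i.e., ⟨f_m, f_{m'}⟩ = 0 whenever |m - m'| ≥ ℓ. Assume only finitely many f_m are nonzero (or the relevant sums converge). Then ‖∑_{m ∈ ℤ} f_m‖² ≤ (2ℓ+1) · ∑_{m ∈ ℤ} ‖f_m‖². -/
/-!
Expand `‖∑ m, f m‖²` into the double sum of the inner products `⟪f m, f m'⟫`. Only the pairs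
with `|m - m'| < ℓ` survive, and each of them is at most `(‖f m‖² + ‖f m'‖²) / 2`. Since the
relation `|m - m'| < ℓ` is symmetric, these pairs contribute `∑ m, #{m' : |m - m'| < ℓ} ‖f m‖²`,
and every `m` has at most `2ℓ + 1` such neighbours.
-/

open Finset
open scoped RealInnerProductSpace

theorem norm_sum_sq_eq_sum_sum_inner {ι E : Type*} [NormedAddCommGroup E]
    [InnerProductSpace ℝ E] (s : Finset ι) (v : ι → E) :
    ‖∑ i ∈ s, v i‖ ^ 2 = ∑ i ∈ s, ∑ j ∈ s, ⟪v i, v j⟫ := by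
  rw [← real_inner_self_eq_norm_sq, sum_inner]
  simp_rw [inner_sum]

theorem sum_sum_filter_mul_le_of_card_filter_le {ι : Type*} (s : Finset ι) (R : ι → ι → Prop)
    [DecidableRel R] [Std.Symm R] (a : ι → ℝ) (N : ℕ)
    (hN : ∀ i ∈ s, #{j ∈ s | R i j} ≤ N) :
    ∑ i ∈ s, ∑ j ∈ s with R i j, a i * a j ≤ N * ∑ i ∈ s, a i ^ 2 := by
  have hswap : ∑ i ∈ s, ∑ j ∈ s with R i j, a j ^ 2 = ∑ i ∈ s, ∑ j ∈ s with R i j, a i ^ 2 := by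
    simp_rw [sum_filter]
    rw [sum_comm]
    exact sum_congr rfl fun i _ => sum_congr rfl fun j _ => by simp only [Std.Symm.iff (r := R) j i]
  calc ∑ i ∈ s, ∑ j ∈ s with R i j, a i * a j
      ≤ ∑ i ∈ s, ∑ j ∈ s with R i j, (a i ^ 2 + a j ^ 2) / 2 := by
        gcongr with i _ j _
        linarith [two_mul_le_add_sq (a i) (a j)]
    _ = ∑ i ∈ s, ∑ j ∈ s with R i j, a i ^ 2 := by
        simp only [add_div, sum_add_distrib, ← sum_div, hswap]
        ring
    _ = ∑ i ∈ s, (#{j ∈ s | R i j} : ℝ) * a i ^ 2 := by simp only [sum_const, nsmul_eq_mul]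
    _ ≤ ∑ i ∈ s, (N : ℝ) * a i ^ 2 := by
        gcongr with i hi
        exact_mod_cast hN i hi
    _ = N * ∑ i ∈ s, a i ^ 2 := (mul_sum ..).symm

theorem card_filter_abs_sub_lt_le (s : Finset ℤ) (m : ℤ) (ℓ : ℕ) :
    #{m' ∈ s | |m - m'| < ℓ} ≤ 2 * ℓ + 1 := by
  calc #{m' ∈ s | |m - m'| < ℓ} ≤ #(Icc (m - ℓ) (m + ℓ)) := by
        refine card_le_card fun m' hm' => ?_
        have := abs_lt.1 (mem_filter.1 hm').2
        rw [mem_Icc]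
        omega
    _ = 2 * ℓ + 1 := by rw [Int.card_Icc]; omega

/-- Quasi-orthogonal system bound in a Hilbert space. -/
theorem quasi_orthogonal_sum_sq_le {H : Type*} [NormedAddCommGroup H]
    [InnerProductSpace ℝ H] (f : ℤ → H) (ℓ : ℕ)
    (hfin : (Function.support f).Finite)
    (horth : ∀ m m' : ℤ, (ℓ : ℤ) ≤ |m - m'| → (inner ℝ (f m) (f m') : ℝ) = 0) :
    ‖∑ᶠ m, f m‖ ^ 2 ≤ (2 * (ℓ : ℝ) + 1) * ∑ᶠ m, ‖f m‖ ^ 2 := by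
  set s := hfin.toFinset
  have hsupp : Function.support f ⊆ s := by simp [s]
  have hsupp_sq : Function.support (fun m => ‖f m‖ ^ 2) ⊆ s :=
    (Function.support_comp_subset (g := fun x : H => ‖x‖ ^ 2) (by simp) f).trans hsupp
  rw [finsum_eq_sum_of_support_subset f hsupp, finsum_eq_sum_of_support_subset _ hsupp_sq,
    norm_sum_sq_eq_sum_sum_inner]
  have hnear (m : ℤ) : ∑ m' ∈ s, ⟪f m, f m'⟫ = ∑ m' ∈ s with |m - m'| < ℓ, ⟪f m, f m'⟫ :=
    (sum_filter_of_ne fun m' _ hne => not_le.1 fun hfar => hne (horth m m' hfar)).symm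
  have : Std.Symm fun m m' : ℤ => |m - m'| < ℓ := ⟨fun m m' h => by rwa [abs_sub_comm]⟩
  calc ∑ m ∈ s, ∑ m' ∈ s, ⟪f m, f m'⟫
      = ∑ m ∈ s, ∑ m' ∈ s with |m - m'| < ℓ, ⟪f m, f m'⟫ := sum_congr rfl fun m _ => hnear m
    _ ≤ ∑ m ∈ s, ∑ m' ∈ s with |m - m'| < ℓ, ‖f m‖ * ‖f m'‖ := by
        gcongr with m _ m' _
        exact real_inner_le_norm _ _
    _ ≤ ((2 * ℓ + 1 : ℕ) : ℝ) * ∑ m ∈ s, ‖f m‖ ^ 2 :=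
        sum_sum_filter_mul_le_of_card_filter_le s _ _ _
          fun m _ => card_filter_abs_sub_lt_le s m ℓ
    _ = (2 * (ℓ : ℝ) + 1) * ∑ m ∈ s, ‖f m‖ ^ 2 := by push_cast; ring
end

section
/- Let p ∈ [1, ∞], let ℓ₁ ≤ m₁ and ℓ₂ ≤ m₂ be integers, and let (g_{k₁,k₂})_{(k₁,k₂) ∈ ℤ²} be measurable functions on ℝ² satisfying |g_{k₁,k₂}(x)| ≤ C₀ / ((1 + 2^{ℓ₁}|x₁ − 2^{−m₁}k₁|)² (1 + 2^{ℓ₂}|x₂ − 2^{−m₂}k₂|)²) for all x = (x₁,x₂) and some C₀ > 0. Let (d_{k₁,k₂}) ∈ ℓ^p(ℤ²) and set F = ∑_{(k₁,k₂) ∈ ℤ²} d_{k₁,k₂} g_{k₁,k₂}. Then there exists C > 0 depending only on C₀ and p such that ‖F‖_{L^p(ℝ²)} ≤ C · 2^{−(m₁+m₂)/p} · 2^{m₁−ℓ₁} · 2^{m₂−ℓ₂} · (∑_{(k₁,k₂)} |d_{k₁,k₂}|^p)^{1/p}. -/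
/-!
Up to the factor `C₀`, `|g_k|` is bounded by the tensor product `h_k` of the one-variable bumps
`(1 + 2^ℓ |u - 2^{-m} k|)^{-2}`. Since `ℓ ≤ m`, the bumps centred on the grid `2^{-m}ℤ` sum to
`O(2^{m-ℓ})` at every point (compare the sum with the integral of `(1 + t|x|)^{-2}`, which is at
most `∫ (1 + t²x²)^{-1} = π/t`), while each bump has integral `O(2^{-ℓ}) = O(2^{m-ℓ} · 2^{-m})`.
So `∑_k h_k ≤ W` pointwise and `∫ h_k ≤ W V` with `V = 2^{-m₁-m₂}`. Schur's test, i.e. Jensen's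
inequality for the weights `h_k(x)` followed by Tonelli, gives `‖∑ a_k h_k‖_p ≤ W V^{1/p} ‖a‖_p`.
-/

open MeasureTheory Set
open scoped ENNReal

theorem lintegral_inv_one_add_mul_abs_sq_le {t : ℝ} (ht : 0 < t) (y : ℝ) :
    ∫⁻ x, ENNReal.ofReal ((1 + t * |x - y|) ^ 2)⁻¹ ≤ ENNReal.ofReal (Real.pi / t) := by
  have hcauchy : ∫ x, (1 + (t * (x - y)) ^ 2)⁻¹ = Real.pi / t := by
    rw [integral_sub_right_eq_self (fun u => (1 + (t * u) ^ 2)⁻¹) y,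
      Measure.integral_comp_mul_left (fun u => (1 + u ^ 2)⁻¹) t, integral_univ_inv_one_add_sq,
      abs_inv, abs_of_pos ht, smul_eq_mul, inv_mul_eq_div]
  have hint : Integrable fun x => (1 + (t * (x - y)) ^ 2)⁻¹ :=
    (integrable_inv_one_add_sq.comp_mul_left' ht.ne').comp_sub_right y
  rw [← hcauchy, ofReal_integral_eq_lintegral_ofReal hint (.of_forall fun x => by positivity)]
  refine lintegral_mono fun x => ENNReal.ofReal_le_ofReal ?_
  gcongr
  have hs : 0 ≤ t * |x - y| := by positivity
  rw [mul_pow, ← sq_abs (x - y), ← mul_pow]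
  nlinarith

theorem inv_one_add_mul_abs_sq_le_four_mul {t x y z : ℝ} (ht : 0 ≤ t) (ht1 : t ≤ 1)
    (hxz : |x - z| ≤ 1) :
    ((1 + t * |y - z|) ^ 2)⁻¹ ≤ 4 * ((1 + t * |x - y|) ^ 2)⁻¹ := by
  have hxy : |x - y| ≤ |y - z| + 1 := by
    rw [abs_sub_comm y]
    linarith [abs_sub_le x z y]
  have hgrow : (1 + t * |x - y|) / 2 ≤ 1 + t * |y - z| := by nlinarith [abs_nonneg (y - z)]
  calc ((1 + t * |y - z|) ^ 2)⁻¹ ≤ (((1 + t * |x - y|) / 2) ^ 2)⁻¹ := by gcongr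
    _ = 4 * ((1 + t * |x - y|) ^ 2)⁻¹ := by rw [div_pow, inv_div]; ring

theorem tsum_inv_one_add_mul_abs_sub_intCast_sq_le {t : ℝ} (ht : 0 < t) (ht1 : t ≤ 1) (y : ℝ) :
    ∑' k : ℤ, ENNReal.ofReal ((1 + t * |y - k|) ^ 2)⁻¹ ≤ ENNReal.ofReal (16 / t) := by
  set φ : ℝ → ℝ≥0∞ := fun x => ENNReal.ofReal (4 * ((1 + t * |x - y|) ^ 2)⁻¹)
  have hterm (k : ℤ) :
      ENNReal.ofReal ((1 + t * |y - k|) ^ 2)⁻¹ ≤ ∫⁻ x in Ico (k : ℝ) (k + 1), φ x := by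
    calc ENNReal.ofReal ((1 + t * |y - k|) ^ 2)⁻¹
        = ∫⁻ _ in Ico (k : ℝ) (k + 1), ENNReal.ofReal ((1 + t * |y - k|) ^ 2)⁻¹ := by simp
      _ ≤ ∫⁻ x in Ico (k : ℝ) (k + 1), φ x := by
        refine setLIntegral_mono (by fun_prop) fun x ⟨hkx, hxk⟩ => ENNReal.ofReal_le_ofReal ?_
        refine inv_one_add_mul_abs_sq_le_four_mul ht.le ht1 ?_
        rw [abs_of_nonneg (by linarith)]
        linarith
  calc ∑' k : ℤ, ENNReal.ofReal ((1 + t * |y - k|) ^ 2)⁻¹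
      ≤ ∑' k : ℤ, ∫⁻ x in Ico (k : ℝ) (k + 1), φ x := ENNReal.tsum_le_tsum hterm
    _ = ∫⁻ x, φ x := by
      rw [← lintegral_iUnion (fun _ => measurableSet_Ico) (pairwise_disjoint_Ico_intCast ℝ),
        iUnion_Ico_intCast, Measure.restrict_univ]
    _ ≤ 4 * ENNReal.ofReal (Real.pi / t) := by
      simp only [φ, ENNReal.ofReal_mul zero_le_four, ENNReal.ofReal_ofNat]
      rw [lintegral_const_mul' _ _ (by norm_num)]
      gcongr
      exact lintegral_inv_one_add_mul_abs_sq_le ht y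
    _ ≤ ENNReal.ofReal (16 / t) := by
      rw [← ENNReal.ofReal_ofNat 4, ← ENNReal.ofReal_mul (by norm_num)]
      refine ENNReal.ofReal_le_ofReal ?_
      rw [mul_div_assoc']
      gcongr
      linarith [Real.pi_le_four]

theorem ENNReal.ofReal_zpow {x : ℝ} (hx : 0 < x) (n : ℤ) :
    ENNReal.ofReal (x ^ n) = ENNReal.ofReal x ^ n := by
  rw [← Real.rpow_intCast, ← ENNReal.ofReal_rpow_of_pos hx, ENNReal.rpow_intCast]

noncomputable def gridBump (ℓ m k : ℤ) (u : ℝ) : ℝ≥0∞ :=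
  ENNReal.ofReal ((1 + (2 : ℝ) ^ ℓ * |u - (2 : ℝ) ^ (-m) * k|) ^ 2)⁻¹

@[fun_prop]
theorem measurable_gridBump (ℓ m k : ℤ) : Measurable (gridBump ℓ m k) := by
  unfold gridBump
  fun_prop

theorem lintegral_gridBump_le (ℓ m k : ℤ) :
    ∫⁻ u, gridBump ℓ m k u ≤ 16 * 2 ^ (m - ℓ) * 2 ^ (-m) := by
  calc ∫⁻ u, gridBump ℓ m k u ≤ ENNReal.ofReal (Real.pi / 2 ^ ℓ) :=
        lintegral_inv_one_add_mul_abs_sq_le (by positivity) _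
    _ ≤ ENNReal.ofReal (4 * 2 ^ (-ℓ)) := by
        rw [zpow_neg, ← div_eq_mul_inv]
        gcongr
        exact Real.pi_le_four
    _ = 4 * 2 ^ (-ℓ) := by
        rw [ENNReal.ofReal_mul (by norm_num), ENNReal.ofReal_zpow two_pos]
        norm_num
    _ ≤ 16 * 2 ^ (m - ℓ) * 2 ^ (-m) := by
        rw [mul_assoc, ← ENNReal.zpow_add two_ne_zero ENNReal.ofNat_ne_top,
          show m - ℓ + -m = -ℓ by ring]
        gcongr
        norm_num

theorem tsum_gridBump_le {ℓ m : ℤ} (hℓm : ℓ ≤ m) (u : ℝ) :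
    ∑' k, gridBump ℓ m k u ≤ 16 * 2 ^ (m - ℓ) := by
  have hrescale (k : ℤ) :
      (2 : ℝ) ^ ℓ * |u - 2 ^ (-m) * k| = 2 ^ (ℓ - m) * |2 ^ m * u - k| := by
    have hscale : (2 : ℝ) ^ m * u - k = 2 ^ m * (u - 2 ^ (-m) * k) := by
      rw [mul_sub, ← mul_assoc, ← zpow_add₀ two_ne_zero, add_neg_cancel, zpow_zero, one_mul]
    rw [hscale, abs_mul, abs_of_pos (zpow_pos two_pos m : (0 : ℝ) < 2 ^ m), ← mul_assoc,
      ← zpow_add₀ two_ne_zero, sub_add_cancel]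
  calc ∑' k, gridBump ℓ m k u
        = ∑' k : ℤ, ENNReal.ofReal ((1 + 2 ^ (ℓ - m) * |2 ^ m * u - k|) ^ 2)⁻¹ := by
        simp only [gridBump, hrescale]
    _ ≤ ENNReal.ofReal (16 / 2 ^ (ℓ - m)) :=
        tsum_inv_one_add_mul_abs_sub_intCast_sq_le (by positivity)
          (zpow_le_one_of_nonpos₀ one_le_two (by omega)) _
    _ = 16 * 2 ^ (m - ℓ) := by
        rw [div_eq_mul_inv, ← zpow_neg, neg_sub, ENNReal.ofReal_mul (by norm_num),
          ENNReal.ofReal_zpow two_pos]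
        norm_num

theorem ENNReal.rpow_tsum_mul_le {ι : Type*} {q : ℝ} (hq : 1 ≤ q) (w f : ι → ℝ≥0∞) :
    (∑' i, w i * f i) ^ q ≤ (∑' i, w i) ^ (q - 1) * ∑' i, w i * f i ^ q := by
  have hq₀ : 0 < q := zero_lt_one.trans_le hq
  have holder : ∑' i, w i * f i ≤ (∑' i, w i) ^ (1 - q⁻¹) * (∑' i, w i * f i ^ q) ^ q⁻¹ := by
    rw [ENNReal.tsum_eq_iSup_sum]
    refine iSup_le fun s => (ENNReal.inner_le_weight_mul_Lp_of_nonneg s hq w f).trans ?_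
    have : 0 ≤ 1 - q⁻¹ := sub_nonneg.2 (inv_le_one_of_one_le₀ hq)
    gcongr <;> exact ENNReal.sum_le_tsum s
  calc (∑' i, w i * f i) ^ q
      ≤ ((∑' i, w i) ^ (1 - q⁻¹) * (∑' i, w i * f i ^ q) ^ q⁻¹) ^ q := by gcongr
    _ = (∑' i, w i) ^ (q - 1) * ∑' i, w i * f i ^ q := by
      rw [ENNReal.mul_rpow_of_nonneg _ _ hq₀.le, ← ENNReal.rpow_mul, ← ENNReal.rpow_mul,
        inv_mul_cancel₀ hq₀.ne', ENNReal.rpow_one, sub_mul, one_mul, inv_mul_cancel₀ hq₀.ne']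

section Schur

variable {X ι : Type*} [MeasurableSpace X] {μ : Measure X} {h : ι → X → ℝ≥0∞} {W V : ℝ≥0∞}

theorem eLpNorm_top_tsum_mul_le [MeasurableSpace ι] [MeasurableSingletonClass ι]
    (hsum : ∀ x, ∑' i, h i x ≤ W) (a : ι → ℝ≥0∞) :
    eLpNorm (fun x => ∑' i, a i * h i x) ∞ μ ≤ W * eLpNorm a ∞ .count := by
  simp only [eLpNorm_exponent_top, eLpNormEssSup_count, enorm_eq_self]
  refine essSup_le_of_ae_le _ (.of_forall fun x => ?_)
  calc ∑' i, a i * h i x ≤ ∑' i, (⨆ j, a j) * h i x := by gcongr with i; exact le_iSup a i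
    _ = (⨆ j, a j) * ∑' i, h i x := ENNReal.tsum_mul_left
    _ ≤ W * ⨆ j, a j := by rw [mul_comm]; gcongr; exact hsum x

theorem lintegral_rpow_tsum_mul_le [Countable ι] (hh : ∀ i, Measurable (h i))
    (hsum : ∀ x, ∑' i, h i x ≤ W)
    (hint : ∀ i, ∫⁻ x, h i x ∂μ ≤ W * V) (a : ι → ℝ≥0∞) {q : ℝ} (hq : 1 ≤ q) :
    ∫⁻ x, (∑' i, a i * h i x) ^ q ∂μ ≤ W ^ q * V * ∑' i, a i ^ q := by
  have hq₁ : 0 ≤ q - 1 := sub_nonneg.2 hq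
  calc ∫⁻ x, (∑' i, a i * h i x) ^ q ∂μ
      ≤ ∫⁻ x, W ^ (q - 1) * ∑' i, a i ^ q * h i x ∂μ := by
        refine lintegral_mono fun x => ?_
        calc (∑' i, a i * h i x) ^ q = (∑' i, h i x * a i) ^ q := by simp_rw [mul_comm (a _)]
          _ ≤ (∑' i, h i x) ^ (q - 1) * ∑' i, h i x * a i ^ q := ENNReal.rpow_tsum_mul_le hq _ _
          _ ≤ W ^ (q - 1) * ∑' i, a i ^ q * h i x := by
            simp_rw [mul_comm (h _ x)]
            gcongr
            exact hsum x
    _ = W ^ (q - 1) * ∑' i, a i ^ q * ∫⁻ x, h i x ∂μ := by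
        rw [lintegral_const_mul _ (by fun_prop), lintegral_tsum fun i => by fun_prop]
        simp_rw [lintegral_const_mul _ (hh _)]
    _ ≤ W ^ (q - 1) * ∑' i, a i ^ q * (W * V) := by gcongr with i; exact hint i
    _ = W ^ q * V * ∑' i, a i ^ q := by
        have hWq : W ^ q = W ^ (q - 1) * W := by
          simpa using ENNReal.rpow_add_of_nonneg (x := W) _ _ hq₁ zero_le_one
        rw [ENNReal.tsum_mul_right, hWq]
        ring

/-- Schur's test. For `p = ∞` the factor `V ^ p.toReal⁻¹` is `V ^ 0 = 1`, as `∞.toReal = 0`. -/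
theorem eLpNorm_tsum_mul_le [Countable ι] [MeasurableSpace ι] [MeasurableSingletonClass ι]
    (hh : ∀ i, Measurable (h i)) (hsum : ∀ x, ∑' i, h i x ≤ W)
    (hint : ∀ i, ∫⁻ x, h i x ∂μ ≤ W * V) (a : ι → ℝ≥0∞) {p : ℝ≥0∞} (hp : 1 ≤ p) :
    eLpNorm (fun x => ∑' i, a i * h i x) p μ ≤ W * V ^ p.toReal⁻¹ * eLpNorm a p .count := by
  rcases eq_or_ne p ∞ with rfl | hp_top
  · simpa using eLpNorm_top_tsum_mul_le hsum a
  have hq : 1 ≤ p.toReal := by simpa using ENNReal.toReal_mono hp_top hp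
  have hq₀ : 0 < p.toReal := zero_lt_one.trans_le hq
  simp only [eLpNorm_eq_lintegral_rpow_enorm_toReal (zero_lt_one.trans_le hp).ne' hp_top,
    enorm_eq_self, lintegral_count, one_div]
  calc (∫⁻ x, (∑' i, a i * h i x) ^ p.toReal ∂μ) ^ p.toReal⁻¹
      ≤ (W ^ p.toReal * V * ∑' i, a i ^ p.toReal) ^ p.toReal⁻¹ := by
        gcongr
        exact lintegral_rpow_tsum_mul_le hh hsum hint a hq
    _ = W * V ^ p.toReal⁻¹ * (∑' i, a i ^ p.toReal) ^ p.toReal⁻¹ := by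
        rw [ENNReal.mul_rpow_of_nonneg _ _ (by positivity),
          ENNReal.mul_rpow_of_nonneg _ _ (by positivity), ← ENNReal.rpow_mul,
          mul_inv_cancel₀ hq₀.ne', ENNReal.rpow_one]

end Schur

noncomputable def moleculeMajorant (c : ℝ≥0∞) (ℓ₁ ℓ₂ m₁ m₂ : ℤ) (k : ℤ × ℤ) (x : ℝ × ℝ) :
    ℝ≥0∞ :=
  c * (gridBump ℓ₁ m₁ k.1 x.1 * gridBump ℓ₂ m₂ k.2 x.2)

section moleculeMajorant

variable (c : ℝ≥0∞) {ℓ₁ ℓ₂ m₁ m₂ : ℤ}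

@[fun_prop]
theorem measurable_moleculeMajorant (k : ℤ × ℤ) :
    Measurable (moleculeMajorant c ℓ₁ ℓ₂ m₁ m₂ k) := by
  unfold moleculeMajorant
  fun_prop

theorem enorm_le_moleculeMajorant {C₀ y : ℝ} {k : ℤ × ℤ} {x : ℝ × ℝ}
    (hy : |y| ≤ C₀ / ((1 + (2 : ℝ) ^ ℓ₁ * |x.1 - (2 : ℝ) ^ (-m₁) * k.1|) ^ 2 *
      (1 + (2 : ℝ) ^ ℓ₂ * |x.2 - (2 : ℝ) ^ (-m₂) * k.2|) ^ 2)) :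
    ‖y‖ₑ ≤ moleculeMajorant (ENNReal.ofReal C₀) ℓ₁ ℓ₂ m₁ m₂ k x := by
  rw [← ofReal_norm, Real.norm_eq_abs]
  refine (ENNReal.ofReal_le_ofReal hy).trans_eq ?_
  rw [div_eq_mul_inv, mul_inv, ENNReal.ofReal_mul' (by positivity),
    ENNReal.ofReal_mul' (by positivity)]
  rfl

theorem tsum_moleculeMajorant_le (h₁ : ℓ₁ ≤ m₁) (h₂ : ℓ₂ ≤ m₂) (x : ℝ × ℝ) :
    ∑' k, moleculeMajorant c ℓ₁ ℓ₂ m₁ m₂ k x ≤ c * 256 * 2 ^ (m₁ - ℓ₁) * 2 ^ (m₂ - ℓ₂) := by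
  simp only [moleculeMajorant, ENNReal.tsum_mul_left, ENNReal.tsum_prod', ENNReal.tsum_mul_right]
  calc c * ((∑' k₁, gridBump ℓ₁ m₁ k₁ x.1) * ∑' k₂, gridBump ℓ₂ m₂ k₂ x.2)
      ≤ c * (16 * 2 ^ (m₁ - ℓ₁) * (16 * 2 ^ (m₂ - ℓ₂))) := by
        gcongr
        exacts [tsum_gridBump_le h₁ x.1, tsum_gridBump_le h₂ x.2]
    _ = c * 256 * 2 ^ (m₁ - ℓ₁) * 2 ^ (m₂ - ℓ₂) := by ring

theorem lintegral_moleculeMajorant_le (k : ℤ × ℤ) :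
    ∫⁻ x, moleculeMajorant c ℓ₁ ℓ₂ m₁ m₂ k x ≤
      c * 256 * 2 ^ (m₁ - ℓ₁) * 2 ^ (m₂ - ℓ₂) * (2 ^ (-m₁) * 2 ^ (-m₂)) := by
  unfold moleculeMajorant
  rw [lintegral_const_mul _ (by fun_prop), Measure.volume_eq_prod,
    lintegral_prod_mul (by fun_prop) (by fun_prop)]
  calc c * ((∫⁻ u, gridBump ℓ₁ m₁ k.1 u) * ∫⁻ u, gridBump ℓ₂ m₂ k.2 u)
      ≤ c * (16 * 2 ^ (m₁ - ℓ₁) * 2 ^ (-m₁) * (16 * 2 ^ (m₂ - ℓ₂) * 2 ^ (-m₂))) := by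
        gcongr
        exacts [lintegral_gridBump_le _ _ _, lintegral_gridBump_le _ _ _]
    _ = _ := by ring

end moleculeMajorant

/-- Frazier–Jawerth type lemma: `L^p` bound for sums of molecules localized on the grid
`2^{-m₁}ℤ × 2^{-m₂}ℤ` with decay at scales `2^{-ℓ₁}, 2^{-ℓ₂}`. -/
theorem molecule_sum_Lp_bound (C₀ : ℝ) (hC₀ : 0 < C₀) (p : ℝ≥0∞) (hp : 1 ≤ p) :
    ∃ C : ℝ≥0∞, 0 < C ∧ C ≠ ⊤ ∧
      ∀ (ℓ₁ ℓ₂ m₁ m₂ : ℤ), ℓ₁ ≤ m₁ → ℓ₂ ≤ m₂ →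
      ∀ g : ℤ × ℤ → ℝ × ℝ → ℝ, (∀ k, Measurable (g k)) →
      (∀ (k : ℤ × ℤ) (x : ℝ × ℝ),
        |g k x| ≤ C₀ / ((1 + (2 : ℝ) ^ ℓ₁ * |x.1 - (2 : ℝ) ^ (-m₁) * k.1|) ^ 2 *
                        (1 + (2 : ℝ) ^ ℓ₂ * |x.2 - (2 : ℝ) ^ (-m₂) * k.2|) ^ 2)) →
      ∀ d : ℤ × ℤ → ℝ, MemLp d p Measure.count →
      eLpNorm (fun x : ℝ × ℝ => ∑' k : ℤ × ℤ, d k * g k x) p volume ≤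
        C * (2 : ℝ≥0∞) ^ (-(((m₁ : ℝ) + (m₂ : ℝ))) / p.toReal) *
          (2 : ℝ≥0∞) ^ (m₁ - ℓ₁) * (2 : ℝ≥0∞) ^ (m₂ - ℓ₂) *
          eLpNorm d p Measure.count := by
  refine ⟨ENNReal.ofReal C₀ * 256, by simpa using hC₀, by finiteness, ?_⟩
  intro ℓ₁ ℓ₂ m₁ m₂ hℓ₁ hℓ₂ g _ hg d _
  set h := moleculeMajorant (ENNReal.ofReal C₀) ℓ₁ ℓ₂ m₁ m₂
  have hV : ((2 : ℝ≥0∞) ^ (-m₁) * 2 ^ (-m₂)) ^ p.toReal⁻¹ =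
      2 ^ (-((m₁ : ℝ) + m₂) / p.toReal) := by
    rw [← ENNReal.zpow_add two_ne_zero ENNReal.ofNat_ne_top, ← ENNReal.rpow_intCast,
      ← ENNReal.rpow_mul]
    push_cast
    ring_nf
  calc eLpNorm (fun x => ∑' k, d k * g k x) p volume
      ≤ eLpNorm (fun x => ∑' k, ‖d k‖ₑ * h k x) p volume :=
        eLpNorm_mono_enorm fun x => by
          rw [enorm_eq_self]
          refine enorm_tsum_le_tsum_enorm.trans (ENNReal.tsum_le_tsum fun k => ?_)
          rw [enorm_mul]
          gcongr
          exact enorm_le_moleculeMajorant (hg k x)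
    _ ≤ _ := eLpNorm_tsum_mul_le (measurable_moleculeMajorant _)
          (tsum_moleculeMajorant_le _ hℓ₁ hℓ₂) (lintegral_moleculeMajorant_le _) _ hp
    _ = _ := by rw [hV, eLpNorm_enorm]; ring
end
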